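/- If a bipartite density matrix ρ_AB on ℂ^{d_A} ⊗ ℂ^{d_B} is quantum-classical, then for every k ≥ 2 there exists a k-Bose-symmetric extendible channel Λ on d_B×d_B matrices such that (id_A ⊗ Λ)[ρ_AB] = ρ_AB; in particular, the supremum over k-Bose-symmetric extendible channels Λ of F(ρ_AB, (id_A ⊗ Λ)[ρ_AB]) equals 1. -/

import Mathlib

open Matrix Filter
open scoped Kronecker ComplexOrder

noncomputable section

/-- The positive semidefinite square root of a matrix, extended by `0` to all matrices. -/
noncomputable def msqrt {n : Type*} [Fintype n] [DecidableEq n] (A : Matrix n n ℂ) :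
    Matrix n n ℂ :=
  open scoped Classical in
  if h : A.PosSemidef then
    (h.1.eigenvectorUnitary : Matrix n n ℂ) * diagonal ((↑) ∘ (√·) ∘ h.1.eigenvalues) *
      (star h.1.eigenvectorUnitary : Matrix n n ℂ) else 0

/-- A density matrix: positive semidefinite with trace one. -/
def IsDensityMatrix {n : Type*} [Fintype n] [DecidableEq n] (ρ : Matrix n n ℂ) : Prop :=
  ρ.PosSemidef ∧ ρ.trace = 1

/-- The fidelity `F(ρ,σ) = Tr √(√ρ σ √ρ)` of two (density) matrices. -/
noncomputable def Fid {n : Type*} [Fintype n] [DecidableEq n] (ρ σ : Matrix n n ℂ) : ℝ :=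
  ((msqrt (msqrt ρ * σ * msqrt ρ)).trace).re

/-- The trace distance `Δ(ρ,σ) = (1/2) Tr √((ρ-σ)† (ρ-σ))`. -/
noncomputable def trDist {n : Type*} [Fintype n] [DecidableEq n] (ρ σ : Matrix n n ℂ) : ℝ :=
  (1 / 2) * ((msqrt ((ρ - σ)ᴴ * (ρ - σ))).trace).re

/-- A quantum channel: a linear map admitting a Kraus representation. -/
def IsQuantumChannel {m n : Type*} [Fintype m] [Fintype n] [DecidableEq m] [DecidableEq n]
    (Λ : Matrix m m ℂ →ₗ[ℂ] Matrix n n ℂ) : Prop :=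
  ∃ (N : ℕ) (K : Fin N → Matrix n m ℂ),
    (∀ X, Λ X = ∑ i, K i * X * (K i)ᴴ) ∧ (∑ i, (K i)ᴴ * K i = 1)

/-- The permutation matrix `P_π` on `(ℂ^d)^{⊗k}`. -/
def permMat (d k : ℕ) (π : Equiv.Perm (Fin k)) :
    Matrix (Fin k → Fin d) (Fin k → Fin d) ℂ :=
  Matrix.of fun f g => if f = g ∘ π then 1 else 0

/-- The orthogonal projector `Π⁺_k` onto the symmetric subspace of `(ℂ^d)^{⊗k}`. -/
noncomputable def symProj (d k : ℕ) : Matrix (Fin k → Fin d) (Fin k → Fin d) ℂ :=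
  ((k.factorial : ℂ))⁻¹ • ∑ π : Equiv.Perm (Fin k), permMat d k π

/-- Combine a value for the first tensor factor with values for the remaining factors. -/
def extendFirst {d k : ℕ} (a : Fin d) (h : {i : Fin k // (i : ℕ) ≠ 0} → Fin d) :
    Fin k → Fin d :=
  fun i => if hi : (i : ℕ) = 0 then a else h ⟨i, hi⟩

/-- The partial trace over the tensor factors `2,…,k` of a matrix on `(ℂ^d)^{⊗k}`. -/
noncomputable def ptrRest {d k : ℕ}
    (W : Matrix (Fin k → Fin d) (Fin k → Fin d) ℂ) : Matrix (Fin d) (Fin d) ℂ :=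
  Matrix.of fun a a' =>
    ∑ h : {i : Fin k // (i : ℕ) ≠ 0} → Fin d, W (extendFirst a h) (extendFirst a' h)

/-- A `k`-Bose-symmetric extendible channel on `d×d` matrices. -/
def IsBoseSymExtendible (d k : ℕ)
    (Λ : Matrix (Fin d) (Fin d) ℂ →ₗ[ℂ] Matrix (Fin d) (Fin d) ℂ) : Prop :=
  ∃ V : Matrix (Fin d) (Fin d) ℂ →ₗ[ℂ] Matrix (Fin k → Fin d) (Fin k → Fin d) ℂ,
    IsQuantumChannel V ∧ (∀ X, symProj d k * V X * symProj d k = V X) ∧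
    (∀ X, Λ X = ptrRest (V X))

/-- An entanglement-breaking (measure-and-prepare) channel on `d×d` matrices. -/
def IsEBChannel (d : ℕ)
    (Λ : Matrix (Fin d) (Fin d) ℂ →ₗ[ℂ] Matrix (Fin d) (Fin d) ℂ) : Prop :=
  ∃ (N : ℕ) (M : Fin N → Matrix (Fin d) (Fin d) ℂ) (β : Fin N → (Fin d → ℂ)),
    (∀ y, (M y).PosSemidef) ∧ (∑ y, M y = 1) ∧ (∀ y, star (β y) ⬝ᵥ β y = 1) ∧
    (∀ X, Λ X = ∑ y, ((M y * X).trace) • vecMulVec (β y) (star (β y)))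

/-- `(id_A ⊗ Λ)[ρ]`: a map acting on the `B` tensor factor of a bipartite matrix. -/
noncomputable def idTensor {dA dB dB' : ℕ}
    (Λ : Matrix (Fin dB) (Fin dB) ℂ →ₗ[ℂ] Matrix (Fin dB') (Fin dB') ℂ)
    (ρ : Matrix (Fin dA × Fin dB) (Fin dA × Fin dB) ℂ) :
    Matrix (Fin dA × Fin dB') (Fin dA × Fin dB') ℂ :=
  Matrix.of fun p q => Λ (Matrix.of fun b b' => ρ (p.1, b) (q.1, b')) p.2 q.2

/-- `(Γ ⊗ id_B)[ρ]`: a map acting on the `A` tensor factor of a bipartite matrix. -/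
noncomputable def tensorId {dA dA' dB : ℕ}
    (Γ : Matrix (Fin dA) (Fin dA) ℂ →ₗ[ℂ] Matrix (Fin dA') (Fin dA') ℂ)
    (ρ : Matrix (Fin dA × Fin dB) (Fin dA × Fin dB) ℂ) :
    Matrix (Fin dA' × Fin dB) (Fin dA' × Fin dB) ℂ :=
  Matrix.of fun p q => Γ (Matrix.of fun a a' => ρ (a, p.2) (a', q.2)) p.1 q.1

/-- Supremum of `F(ρ, (id ⊗ Λ)[ρ])` over `k`-Bose-symmetric extendible channels `Λ`. -/
noncomputable def symSup (dA dB k : ℕ)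
    (ρ : Matrix (Fin dA × Fin dB) (Fin dA × Fin dB) ℂ) : ℝ :=
  sSup {x : ℝ | ∃ Λ, IsBoseSymExtendible dB k Λ ∧ x = Fid ρ (idTensor Λ ρ)}

/-- Supremum of `F(ρ, (id ⊗ Λ)[ρ])` over entanglement-breaking channels `Λ`. -/
noncomputable def ebSup (dA dB : ℕ)
    (ρ : Matrix (Fin dA × Fin dB) (Fin dA × Fin dB) ℂ) : ℝ :=
  sSup {x : ℝ | ∃ Λ, IsEBChannel dB Λ ∧ x = Fid ρ (idTensor Λ ρ)}

/-- A quantum-classical bipartite state. -/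
def IsQuantumClassical {dA dB : ℕ}
    (ρ : Matrix (Fin dA × Fin dB) (Fin dA × Fin dB) ℂ) : Prop :=
  ∃ (N : ℕ) (p : Fin N → ℝ) (σ : Fin N → Matrix (Fin dA) (Fin dA) ℂ)
    (b : Fin N → (Fin dB → ℂ)),
    (∀ i, 0 ≤ p i) ∧ (∑ i, p i = 1) ∧ (∀ i, IsDensityMatrix (σ i)) ∧
    (∀ i j, star (b i) ⬝ᵥ b j = if i = j then 1 else 0) ∧
    ρ = ∑ i, (p i : ℂ) • (σ i ⊗ₖ vecMulVec (b i) (star (b i)))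

/-- The Choi matrix `J(Λ) = ∑_{x,x'} |x⟩⟨x'| ⊗ Λ(|x⟩⟨x'|)`. -/
noncomputable def choiMatrix {d : ℕ} {Y : Type*} [Fintype Y] [DecidableEq Y]
    (Λ : Matrix (Fin d) (Fin d) ℂ →ₗ[ℂ] Matrix Y Y ℂ) :
    Matrix (Fin d × Y) (Fin d × Y) ℂ :=
  Matrix.of fun p q => Λ (Matrix.single p.1 q.1 1) p.2 q.2

/-- A `k`-Bose-symmetric extension (on the output system) of a matrix on `ℂ^d ⊗ ℂ^d`. -/
def HasBoseSymExtension {d : ℕ} (k : ℕ)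
    (W : Matrix (Fin d × Fin d) (Fin d × Fin d) ℂ) : Prop :=
  ∃ Wt : Matrix (Fin d × (Fin k → Fin d)) (Fin d × (Fin k → Fin d)) ℂ,
    Wt.PosSemidef ∧
    ((1 : Matrix (Fin d) (Fin d) ℂ) ⊗ₖ symProj d k) * Wt *
        ((1 : Matrix (Fin d) (Fin d) ℂ) ⊗ₖ symProj d k) = Wt ∧
    (∀ x x' b b', W (x, b) (x', b') =
      ∑ h : {i : Fin k // (i : ℕ) ≠ 0} → Fin d,
        Wt (x, extendFirst b h) (x', extendFirst b' h))

/-- The `k`-fold tensor power of a vector in `ℂ^d`. -/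
def vecPow {d : ℕ} (k : ℕ) (v : Fin d → ℂ) : (Fin k → Fin d) → ℂ :=
  fun f => ∏ i, v (f i)

end

/-! ### Auxiliary lemmas -/

noncomputable section


section vmv
variable {m n p q : Type*} [Fintype m] [Fintype n] [Fintype p] [Fintype q]

lemma vmv_mul (u : m → ℂ) (v : n → ℂ) (M : Matrix n p ℂ) :
    vecMulVec u v * M = vecMulVec u (v ᵥ* M) := by
  ext a b
  simp [vecMulVec_apply, mul_apply, vecMul, dotProduct, Finset.mul_sum, mul_assoc]

lemma mul_vmv (M : Matrix m n ℂ) (u : n → ℂ) (v : p → ℂ) :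
    M * vecMulVec u v = vecMulVec (M *ᵥ u) v := by
  ext a b
  simp [vecMulVec_apply, mul_apply, mulVec, dotProduct, Finset.sum_mul, mul_assoc]

lemma vmv_conjT (u : m → ℂ) (v : n → ℂ) :
    (vecMulVec u v)ᴴ = vecMulVec (star v) (star u) := by
  ext a b
  simp [vecMulVec_apply, conjTranspose_apply, mul_comm]

lemma vmv_mul_vmv (u : m → ℂ) (v : n → ℂ) (x : n → ℂ) (y : p → ℂ) :
    vecMulVec u v * vecMulVec x y = (v ⬝ᵥ x) • vecMulVec u y := by
  ext a b
  simp [vecMulVec_apply, mul_apply, dotProduct, Finset.sum_mul, Finset.mul_sum]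
  exact Finset.sum_congr rfl fun i _ => by ring

lemma vmv_mulVec (u : m → ℂ) (v : n → ℂ) (x : n → ℂ) :
    vecMulVec u v *ᵥ x = (v ⬝ᵥ x) • u := by
  ext a
  simp [vecMulVec_apply, mulVec, dotProduct, Finset.mul_sum, mul_assoc, mul_comm]
  exact Finset.sum_congr rfl fun i _ => by ring

lemma trace_vmv_mul (u : m → ℂ) (v : m → ℂ) (M : Matrix m m ℂ) :
    (vecMulVec u v * M).trace = v ⬝ᵥ (M *ᵥ u) := by
  simp [trace, mul_apply, vecMulVec_apply, diag, mulVec, dotProduct, Finset.mul_sum]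
  rw [Finset.sum_comm]
  exact Finset.sum_congr rfl fun i _ => Finset.sum_congr rfl fun j _ => by ring

end vmv

section vp
variable {d k : ℕ}

lemma star_vecPow (v : Fin d → ℂ) : star (vecPow k v) = vecPow k (star v) := by
  funext f
  simp [vecPow]

lemma star_vecPow_dot (v w : Fin d → ℂ) :
    star (vecPow k v) ⬝ᵥ vecPow k w = (star v ⬝ᵥ w) ^ k := by
  have h1 : (star v ⬝ᵥ w) ^ k = ∏ _i : Fin k, (star v ⬝ᵥ w) := by simp
  rw [h1]
  simp only [dotProduct, Pi.star_apply]
  rw [Finset.prod_univ_sum (fun _ => Finset.univ) (fun _ x => star (v x) * w x),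
    Fintype.piFinset_univ]
  refine Finset.sum_congr rfl fun f _ => ?_
  simp only [vecPow, Pi.star_apply]
  rw [star_prod, ← Finset.prod_mul_distrib]

lemma perm_cond_iff (π : Equiv.Perm (Fin k)) (f g : Fin k → Fin d) :
    (f = g ∘ π) ↔ (g = f ∘ ⇑π⁻¹) := by
  constructor
  · intro h; funext i; simp [h]
  · intro h; funext i; simp [h]

lemma permMat_mulVec_vecPow (π : Equiv.Perm (Fin k)) (v : Fin d → ℂ) :
    permMat d k π *ᵥ vecPow k v = vecPow k v := by
  funext f
  simp only [permMat, mulVec, dotProduct, of_apply, ite_mul, one_mul, zero_mul]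
  rw [Finset.sum_congr rfl (fun g _ => by rw [if_congr (perm_cond_iff π f g) rfl rfl])]
  rw [Finset.sum_ite_eq' Finset.univ (f ∘ ⇑π⁻¹) (fun g => vecPow k v g)]
  simp only [Finset.mem_univ, if_true]
  show (∏ i, v (f (π⁻¹ i))) = ∏ i, v (f i)
  exact Equiv.prod_comp π⁻¹ (fun i => v (f i))

lemma symProj_mulVec_vecPow (v : Fin d → ℂ) :
    symProj d k *ᵥ vecPow k v = vecPow k v := by
  have hcard : Fintype.card (Equiv.Perm (Fin k)) = k.factorial := by
    rw [Fintype.card_perm, Fintype.card_fin]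
  have hsum : (∑ π : Equiv.Perm (Fin k), permMat d k π) *ᵥ vecPow k v
      = ∑ π : Equiv.Perm (Fin k), permMat d k π *ᵥ vecPow k v := by
    funext g
    simp only [mulVec, dotProduct, Matrix.sum_apply, Finset.sum_mul, Finset.sum_apply]
    rw [Finset.sum_comm]
  rw [symProj, smul_mulVec, hsum,
    Finset.sum_congr rfl (fun π _ => permMat_mulVec_vecPow π v)]
  funext f
  simp only [Finset.sum_const, Finset.card_univ, hcard, Pi.smul_apply, smul_eq_mul,
    nsmul_eq_mul, Pi.natCast_def, Pi.mul_apply]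
  rw [← mul_assoc, inv_mul_cancel₀ (by exact_mod_cast k.factorial_ne_zero), one_mul]

lemma permMat_transpose (π : Equiv.Perm (Fin k)) :
    (permMat d k π)ᵀ = permMat d k π⁻¹ := by
  ext f g
  simp only [transpose_apply, permMat, of_apply]
  rw [if_congr (perm_cond_iff π g f) rfl rfl]

lemma symProj_transpose : (symProj d k)ᵀ = symProj d k := by
  simp only [symProj, transpose_smul, transpose_sum]
  congr 1
  rw [Finset.sum_congr rfl (fun π _ => permMat_transpose π)]
  exact Equiv.sum_comp (Equiv.inv (Equiv.Perm (Fin k))) (permMat d k)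

lemma symProj_fix (v w : Fin d → ℂ) :
    symProj d k * vecMulVec (vecPow k v) (star (vecPow k w)) * symProj d k
      = vecMulVec (vecPow k v) (star (vecPow k w)) := by
  rw [mul_vmv, symProj_mulVec_vecPow, vmv_mul]
  congr 1
  rw [← symProj_transpose, Matrix.vecMul_transpose, star_vecPow, symProj_mulVec_vecPow,
    ← star_vecPow]

end vp

section ext1
variable {d k : ℕ}

def zeroUnique (hk : 0 < k) : Unique {i : Fin k // (i : ℕ) = 0} :=
  ⟨⟨⟨⟨0, hk⟩, rfl⟩⟩, by rintro ⟨i, hi⟩; exact Subtype.ext (Fin.ext hi)⟩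

lemma prod_extendFirst (hk : 0 < k) (g : Fin d → ℂ) (a : Fin d)
    (h : {i : Fin k // (i : ℕ) ≠ 0} → Fin d) :
    ∏ i, g (extendFirst a h i) = g a * ∏ t, g (h t) := by
  haveI := zeroUnique (k := k) hk
  simp only [extendFirst, apply_dite g]
  rw [Fintype.prod_dite (fun _ _ => g a) (fun i hi => g (h ⟨i, hi⟩))]
  congr 1
  exact Fintype.prod_unique _

lemma vecPow_extendFirst (hk : 0 < k) (v : Fin d → ℂ) (a : Fin d)
    (h : {i : Fin k // (i : ℕ) ≠ 0} → Fin d) :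
    vecPow k v (extendFirst a h) = v a * ∏ t, v (h t) :=
  prod_extendFirst hk v a h

/-- The defining bijection for the partial trace. -/
def extendEquiv (hk : 0 < k) :
    (Fin d × ({i : Fin k // (i : ℕ) ≠ 0} → Fin d)) ≃ (Fin k → Fin d) where
  toFun p := extendFirst p.1 p.2
  invFun f := (f ⟨0, hk⟩, fun t => f t)
  left_inv p := by
    obtain ⟨a, h⟩ := p
    refine Prod.ext ?_ ?_
    · show extendFirst a h ⟨0, hk⟩ = a
      simp [extendFirst]
    · funext t
      show extendFirst a h ↑t = h t
      simp only [extendFirst, t.2, dif_neg, not_false_iff]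
  right_inv f := by
    funext i
    simp only [extendFirst]
    split
    · next hi => congr 1; exact Fin.ext hi.symm
    · rfl

lemma trace_ptrRest (hk : 0 < k) (W : Matrix (Fin k → Fin d) (Fin k → Fin d) ℂ) :
    (ptrRest W).trace = W.trace := by
  simp only [trace, diag, ptrRest, of_apply]
  rw [← Equiv.sum_comp (extendEquiv (d := d) hk) (fun f => W f f), Fintype.sum_prod_type]
  rfl

lemma ptrRest_vecPow (hk : 0 < k) (v w : Fin d → ℂ) (hvw : star w ⬝ᵥ v = 1) :
    ptrRest (vecMulVec (vecPow k v) (star (vecPow k w))) = vecMulVec v (star w) := by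
  ext a a'
  simp only [ptrRest, of_apply, vecMulVec_apply, star_vecPow]
  have key : ∀ h : {i : Fin k // (i : ℕ) ≠ 0} → Fin d,
      vecPow k v (extendFirst a h) * vecPow k (star w) (extendFirst a' h)
        = (v a * star w a') * ∏ t, (v (h t) * star w (h t)) := by
    intro h
    rw [vecPow_extendFirst hk, vecPow_extendFirst hk, Finset.prod_mul_distrib]
    ring
  rw [Finset.sum_congr rfl (fun h _ => key h), ← Finset.mul_sum]
  have hps := Finset.prod_univ_sum
    (fun _ : {i : Fin k // (i : ℕ) ≠ 0} => (Finset.univ : Finset (Fin d)))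
    (fun _ x => v x * star w x)
  rw [Fintype.piFinset_univ] at hps
  rw [← hps]
  have hone : ∀ _t : {i : Fin k // (i : ℕ) ≠ 0}, (∑ x, v x * star w x) = 1 := by
    intro _t
    rw [← hvw]
    simp [dotProduct, mul_comm]
  rw [Finset.prod_congr rfl (fun t _ => hone t), Finset.prod_const_one, mul_one]

end ext1

/-! ### generic PSD / trace helpers -/

section sqrtPort
variable {n : Type*} [Fintype n] [DecidableEq n]

open scoped MatrixOrder in
lemma msqrt_eq_cfcSqrt {A : Matrix n n ℂ} (h : A.PosSemidef) : msqrt A = CFC.sqrt A := by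
  rw [CFC.sqrt_eq_cfc, cfc_nnreal_eq_real _ A, h.1.cfc_eq]
  simp only [msqrt, dif_pos h, IsHermitian.cfc, Unitary.conjStarAlgAut_apply]
  congr 3
  funext i
  simp [Real.coe_toNNReal', max_eq_left (h.eigenvalues_nonneg i)]

/-- The square root of a positive semidefinite matrix (port shim). -/
abbrev Matrix.PosSemidef.sqrt {A : Matrix n n ℂ} (_h : A.PosSemidef) : Matrix n n ℂ := msqrt A

open scoped MatrixOrder in
lemma Matrix.PosSemidef.posSemidef_sqrt {A : Matrix n n ℂ} (h : A.PosSemidef) :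
    h.sqrt.PosSemidef := by
  show (msqrt A).PosSemidef
  rw [msqrt_eq_cfcSqrt h]
  exact Matrix.nonneg_iff_posSemidef.mp (CFC.sqrt_nonneg A)

open scoped MatrixOrder in
lemma Matrix.PosSemidef.sqrt_mul_self {A : Matrix n n ℂ} (h : A.PosSemidef) :
    h.sqrt * h.sqrt = A := by
  show msqrt A * msqrt A = A
  rw [msqrt_eq_cfcSqrt h]
  exact CFC.sqrt_mul_sqrt_self A (Matrix.nonneg_iff_posSemidef.mpr h)

open scoped MatrixOrder in
lemma Matrix.PosSemidef.eq_sqrt_of_sq_eq {A B : Matrix n n ℂ} (hA : A.PosSemidef)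
    (hB : B.PosSemidef) (hsq : A ^ 2 = B) : A = hB.sqrt := by
  show A = msqrt B
  rw [msqrt_eq_cfcSqrt hB, ← hsq, CFC.sqrt_sq A (Matrix.nonneg_iff_posSemidef.mpr hA)]

end sqrtPort

section psd
variable {n : Type*} [Fintype n] [DecidableEq n]

lemma msqrt_eq {A : Matrix n n ℂ} (h : A.PosSemidef) : msqrt A = h.sqrt := by
  simp only [msqrt]

lemma psd_sum {ι : Type*} (s : Finset ι) (f : ι → Matrix n n ℂ)
    (h : ∀ i ∈ s, (f i).PosSemidef) : (∑ i ∈ s, f i).PosSemidef := by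
  classical
  induction s using Finset.induction_on with
  | empty => simpa using Matrix.PosSemidef.zero
  | insert a s hnotmem ih =>
    rw [Finset.sum_insert hnotmem]
    exact (h a (Finset.mem_insert_self a s)).add
      (ih (fun i hi => h i (Finset.mem_insert_of_mem hi)))

lemma dot_self_re_nonneg (v : n → ℂ) : 0 ≤ (star v ⬝ᵥ v).re := by
  simp only [dotProduct, Pi.star_apply, Complex.re_sum]
  refine Finset.sum_nonneg fun i _ => ?_
  simp only [Complex.star_def, ← Complex.normSq_eq_conj_mul_self]
  simp [Complex.normSq_nonneg]

lemma psd_trace_re_nonneg {A : Matrix n n ℂ} (h : A.PosSemidef) : 0 ≤ A.trace.re := by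
  simp only [trace, diag, Complex.re_sum]
  refine Finset.sum_nonneg fun i _ => ?_
  have h1 : 0 ≤ star (Pi.single i 1 : n → ℂ) ⬝ᵥ (A *ᵥ Pi.single i 1) := h.dotProduct_mulVec_nonneg _
  have h2 : star (Pi.single i 1 : n → ℂ) ⬝ᵥ (A *ᵥ Pi.single i 1) = A i i := by
    simp [dotProduct, mulVec, Pi.single_apply, Finset.mul_sum]
  rw [h2] at h1
  rw [Complex.le_def] at h1
  exact h1.1

lemma re_dot_le (x y : n → ℂ) :
    (star y ⬝ᵥ x).re ≤ ((star y ⬝ᵥ y).re + (star x ⬝ᵥ x).re) / 2 := by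
  have expand : (star (x - y) ⬝ᵥ (x - y))
      = star x ⬝ᵥ x - star x ⬝ᵥ y - star y ⬝ᵥ x + star y ⬝ᵥ y := by
    simp only [star_sub, sub_dotProduct, dotProduct_sub]
    ring
  have hre : 0 ≤ (star (x - y) ⬝ᵥ (x - y)).re := dot_self_re_nonneg _
  rw [expand] at hre
  have him : (star x ⬝ᵥ y).re = (star y ⬝ᵥ x).re := by
    rw [Matrix.star_dotProduct]
    simp
  simp only [Complex.add_re, Complex.sub_re] at hre
  linarith

end psd

/-! ### the fidelity bound -/

section fid
variable {n : Type*} [Fintype n] [DecidableEq n]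

lemma msqrt_psd {A : Matrix n n ℂ} (h : A.PosSemidef) :
    (msqrt A).PosSemidef := by
  rw [msqrt_eq h]; exact h.posSemidef_sqrt

lemma msqrt_mul_self {A : Matrix n n ℂ} (h : A.PosSemidef) :
    msqrt A * msqrt A = A := by
  rw [msqrt_eq h]; exact h.sqrt_mul_self

lemma sandwich_psd {ρ σ : Matrix n n ℂ} (hρ : ρ.PosSemidef) (hσ : σ.PosSemidef) :
    (msqrt ρ * σ * msqrt ρ).PosSemidef := by
  have h := hσ.mul_mul_conjTranspose_same (msqrt ρ)
  rwa [(msqrt_psd hρ).1.eq] at h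

lemma fid_self {ρ : Matrix n n ℂ} (hρ : IsDensityMatrix ρ) : Fid ρ ρ = 1 := by
  obtain ⟨hps, htr⟩ := hρ
  set s := msqrt ρ with hs
  have hss : s * s = ρ := msqrt_mul_self hps
  have e : s * ρ * s = ρ * ρ := by
    calc s * ρ * s = s * (s * s) * s := by rw [hss]
      _ = (s * s) * (s * s) := by simp only [mul_assoc]
      _ = ρ * ρ := by rw [hss]
  have hM : (s * ρ * s).PosSemidef := sandwich_psd hps hps
  have hsq : ρ ^ 2 = s * ρ * s := by rw [pow_two, ← e]
  have hρeq : ρ = hM.sqrt := Matrix.PosSemidef.eq_sqrt_of_sq_eq hps hM hsq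
  show ((msqrt (s * ρ * s)).trace).re = 1
  rw [msqrt_eq hM, ← hρeq, htr]
  simp

end fid

section fidbound
variable {n : Type*} [Fintype n] [DecidableEq n]

lemma fid_le_one {ρ σ : Matrix n n ℂ} (hρ : IsDensityMatrix ρ)
    (hσps : σ.PosSemidef) (hσtr : σ.trace = 1) : Fid ρ σ ≤ 1 := by
  classical
  obtain ⟨hps, htr⟩ := hρ
  set A := msqrt ρ with hA
  have hApsd : A.PosSemidef := msqrt_psd hps
  have hAA : A * A = ρ := msqrt_mul_self hps
  set B := hσps.sqrt with hB
  have hBpsd : B.PosSemidef := hσps.posSemidef_sqrt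
  have hBB : B * B = σ := hσps.sqrt_mul_self
  set C := B * A with hC
  have hCt : Cᴴ = A * B := by
    rw [hC, conjTranspose_mul, hApsd.1.eq, hBpsd.1.eq]
  have hMeq : A * σ * A = Cᴴ * C := by
    rw [hCt, hC, ← hBB]
    simp only [mul_assoc]
  have hM : (A * σ * A).PosSemidef := sandwich_psd hps hσps
  have hFid : Fid ρ σ = (hM.sqrt).trace.re := by
    show ((msqrt (A * σ * A)).trace).re = _
    rw [msqrt_eq hM]
  set S := hM.sqrt with hS
  have hSpsd : S.PosSemidef := hM.posSemidef_sqrt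
  have hSS : S * S = A * σ * A := hM.sqrt_mul_self
  set U : Matrix n n ℂ := (hSpsd.1.eigenvectorUnitary : Matrix n n ℂ) with hU
  set dv : n → ℝ := hSpsd.1.eigenvalues with hd
  have hdnn : ∀ i, 0 ≤ dv i := hSpsd.eigenvalues_nonneg
  have hspec : S = U * diagonal (RCLike.ofReal ∘ dv) * star U := by
    have := hSpsd.1.spectral_theorem; rwa [Unitary.conjStarAlgAut_apply] at this
  have hUU : star U * U = 1 := by
    have := hSpsd.1.eigenvectorUnitary.2
    exact (Unitary.mem_iff.mp this).1
  have hUU' : U * star U = 1 := by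
    have := hSpsd.1.eigenvectorUnitary.2
    exact (Unitary.mem_iff.mp this).2
  -- trace of S
  have htrS : S.trace = ∑ i, (dv i : ℂ) := by
    rw [hspec, Matrix.trace_mul_cycle, hUU, one_mul, trace_diagonal]
    rfl
  -- columns of U
  set v : n → n → ℂ := fun i => fun a => U a i with hv
  have hortho : ∀ i j, star (v i) ⬝ᵥ v j = if i = j then 1 else 0 := by
    intro i j
    have h1 : (star U * U) i j = (1 : Matrix n n ℂ) i j := by rw [hUU]
    rw [Matrix.one_apply] at h1
    rw [← h1]
    simp [mul_apply, dotProduct, hv, Matrix.star_apply]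
  have hSv : ∀ i, S *ᵥ v i = (dv i : ℂ) • v i := by
    intro i
    have hSU : S * U = U * diagonal (RCLike.ofReal ∘ dv) := by
      rw [hspec, mul_assoc, hUU, mul_one]
    funext a
    have h1 : (S * U) a i = (U * diagonal (RCLike.ofReal ∘ dv) : Matrix n n ℂ) a i := by rw [hSU]
    rw [Matrix.mul_diagonal] at h1
    simpa [mulVec, dotProduct, mul_apply, hv, mul_comm] using h1
  have hMv : ∀ i, (A * σ * A) *ᵥ v i = ((dv i : ℂ) ^ 2) • v i := by
    intro i
    rw [← hSS, ← Matrix.mulVec_mulVec, hSv, Matrix.mulVec_smul, hSv, smul_smul, pow_two]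
  set c : n → n → ℂ := fun i => C *ᵥ v i with hc
  have hcc : ∀ i j, star (c i) ⬝ᵥ c j = if i = j then ((dv j : ℂ) ^ 2) else 0 := by
    intro i j
    rw [hc]
    rw [Matrix.star_mulVec, Matrix.dotProduct_mulVec, Matrix.vecMul_vecMul]
    have : star (v i) ᵥ* (Cᴴ * C) = star (v i) ᵥ* (A * σ * A) := by rw [← hMeq]
    rw [this, ← Matrix.dotProduct_mulVec, hMv j, dotProduct_smul, hortho i j]
    simp only [smul_eq_mul, mul_ite, mul_one, mul_zero]
  -- the subset of nonzero eigenvalues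
  set T : Finset n := Finset.univ.filter (fun i => dv i ≠ 0) with hT
  set w : n → n → ℂ := fun i => ((dv i : ℂ))⁻¹ • c i with hw
  have horthow : ∀ i ∈ T, ∀ j ∈ T, star (w i) ⬝ᵥ w j = if i = j then 1 else 0 := by
    intro i hi j hj
    rw [Finset.mem_filter] at hi hj
    rw [hw]
    simp only [star_smul, smul_dotProduct, dotProduct_smul, hcc i j]
    rw [star_inv₀]
    simp only [Complex.star_def, Complex.conj_ofReal, smul_eq_mul]
    split
    · next heq =>
      subst heq
      have hne : ((dv i : ℂ)) ≠ 0 := by exact_mod_cast hi.2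
      field_simp [hne]
    · simp
  -- d i = re ⟪y i, x i⟫
  set x : n → n → ℂ := fun i => A *ᵥ v i with hx
  set y : n → n → ℂ := fun i => B *ᵥ w i with hy
  have hkey : ∀ i ∈ T, dv i = (star (y i) ⬝ᵥ x i).re := by
    intro i hi
    rw [Finset.mem_filter] at hi
    have h1 : star (y i) ⬝ᵥ x i = star (w i) ⬝ᵥ c i := by
      rw [hy, Matrix.star_mulVec, Matrix.dotProduct_mulVec, hBpsd.1.eq,
        Matrix.vecMul_vecMul, ← Matrix.dotProduct_mulVec]
    have h2 : star (w i) ⬝ᵥ c i = (dv i : ℂ) := by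
      have hne : ((dv i : ℂ)) ≠ 0 := by exact_mod_cast hi.2
      rw [hw]
      simp only [star_smul, smul_dotProduct, hcc i i, if_pos rfl, if_true]
      rw [star_inv₀]
      simp only [Complex.star_def, Complex.conj_ofReal, smul_eq_mul]
      field_simp [hne]
    rw [h1, h2, Complex.ofReal_re]
  -- bound for the ρ-side Gram terms
  have hterm1 : ∀ i, star (x i) ⬝ᵥ x i = star (v i) ⬝ᵥ (ρ *ᵥ v i) := by
    intro i
    rw [hx]
    rw [Matrix.star_mulVec, Matrix.dotProduct_mulVec, Matrix.vecMul_vecMul, hApsd.1.eq,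
      hAA, ← Matrix.dotProduct_mulVec]
  have hdiag : ∀ (M : Matrix n n ℂ) (i : n),
      star (v i) ⬝ᵥ (M *ᵥ v i) = (star U * M * U) i i := by
    intro M i
    simp only [mul_apply, mulVec, dotProduct, Pi.star_apply, Matrix.star_apply, hv,
      Finset.sum_mul, Finset.mul_sum]
    rw [Finset.sum_comm]
    exact Finset.sum_congr rfl fun a _ => Finset.sum_congr rfl fun b _ => by ring
  have hxbound : ∑ i ∈ T, (star (x i) ⬝ᵥ x i).re ≤ 1 := by
    have hle : ∑ i ∈ T, (star (x i) ⬝ᵥ x i).re ≤ ∑ i, (star (x i) ⬝ᵥ x i).re := by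
      refine Finset.sum_le_sum_of_subset_of_nonneg (Finset.filter_subset _ _) ?_
      intro i _ _
      exact dot_self_re_nonneg _
    have heq : ∑ i, (star (x i) ⬝ᵥ x i).re = ((star U * ρ * U).trace).re := by
      rw [← Complex.re_sum]
      congr 1
      simp only [Matrix.trace, Matrix.diag]
      exact Finset.sum_congr rfl fun i _ => by rw [hterm1 i, hdiag ρ i]
    have htrc : (star U * ρ * U).trace = ρ.trace := by
      rw [Matrix.trace_mul_cycle, hUU', one_mul]
    calc ∑ i ∈ T, (star (x i) ⬝ᵥ x i).re ≤ ∑ i, (star (x i) ⬝ᵥ x i).re := hle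
      _ = ((star U * ρ * U).trace).re := heq
      _ = 1 := by rw [htrc, htr]; simp
  -- bound for the σ-side Gram terms
  have hterm2 : ∀ i, star (y i) ⬝ᵥ y i = star (w i) ⬝ᵥ (σ *ᵥ w i) := by
    intro i
    rw [hy]
    rw [Matrix.star_mulVec, Matrix.dotProduct_mulVec, Matrix.vecMul_vecMul, hBpsd.1.eq,
      hBB, ← Matrix.dotProduct_mulVec]
  set P : Matrix n n ℂ := ∑ i ∈ T, vecMulVec (w i) (star (w i)) with hP
  have hPP : P * P = P := by
    rw [hP, Finset.sum_mul_sum]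
    have : ∀ i ∈ T, ∀ j ∈ T,
        vecMulVec (w i) (star (w i)) * vecMulVec (w j) (star (w j))
          = if i = j then vecMulVec (w i) (star (w j)) else 0 := by
      intro i hi j hj
      rw [vmv_mul_vmv, horthow i hi j hj]
      split <;> simp
    calc (∑ i ∈ T, ∑ j ∈ T, vecMulVec (w i) (star (w i)) * vecMulVec (w j) (star (w j)))
        = ∑ i ∈ T, ∑ j ∈ T, (if i = j then vecMulVec (w i) (star (w j)) else 0) :=
          Finset.sum_congr rfl fun i hi => Finset.sum_congr rfl fun j hj => this i hi j hj
      _ = ∑ i ∈ T, vecMulVec (w i) (star (w i)) := by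
          refine Finset.sum_congr rfl fun i hi => ?_
          rw [Finset.sum_ite_eq T i (fun j => vecMulVec (w i) (star (w j))), if_pos hi]
  have hPh : Pᴴ = P := by
    rw [hP, conjTranspose_sum]
    exact Finset.sum_congr rfl fun i _ => by rw [vmv_conjT, star_star]
  have hQh : (1 - P)ᴴ = 1 - P := by
    rw [conjTranspose_sub, conjTranspose_one, hPh]
  have hQQ : (1 - P) * (1 - P) = 1 - P := by
    rw [sub_mul, one_mul, mul_sub, mul_one, hPP]
    abel
  have hQpsd : (1 - P).PosSemidef := by
    have h0 := Matrix.posSemidef_conjTranspose_mul_self (1 - P)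
    rwa [hQh, hQQ] at h0
  have hybound : ∑ i ∈ T, (star (y i) ⬝ᵥ y i).re ≤ 1 := by
    have htr1 : (P * σ).trace = ∑ i ∈ T, star (w i) ⬝ᵥ (σ *ᵥ w i) := by
      rw [hP, Finset.sum_mul, trace_sum]
      exact Finset.sum_congr rfl fun i _ => trace_vmv_mul _ _ _
    have htr2 : 0 ≤ (((1 - P) * σ).trace).re := by
      have hpsd3 : ((1 - P) * σ * (1 - P)ᴴ).PosSemidef := hσps.mul_mul_conjTranspose_same _
      have e3 : ((1 - P) * σ * (1 - P)ᴴ).trace = ((1 - P) * σ).trace := by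
        rw [hQh, Matrix.trace_mul_cycle, hQQ]
      have := psd_trace_re_nonneg hpsd3
      rwa [e3] at this
    have hsplit : (P * σ).trace = σ.trace - ((1 - P) * σ).trace := by
      rw [sub_mul, one_mul, trace_sub]
      ring
    calc ∑ i ∈ T, (star (y i) ⬝ᵥ y i).re
        = ((P * σ).trace).re := by
          rw [htr1, ← Complex.re_sum]
          congr 1
          exact Finset.sum_congr rfl fun i _ => hterm2 i
      _ = (σ.trace).re - (((1 - P) * σ).trace).re := by rw [hsplit, Complex.sub_re]
      _ ≤ 1 := by rw [hσtr]; simp; linarith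
  -- putting everything together
  have hfe : Fid ρ σ = ∑ i, dv i := by
    rw [hFid, htrS, Complex.re_sum]
    exact Finset.sum_congr rfl fun i _ => Complex.ofReal_re _
  have hfiltereq : ∑ i ∈ T, dv i = ∑ i, dv i := Finset.sum_filter_ne_zero _
  calc Fid ρ σ = ∑ i ∈ T, dv i := by rw [hfe, hfiltereq]
    _ ≤ ∑ i ∈ T, ((star (y i) ⬝ᵥ y i).re + (star (x i) ⬝ᵥ x i).re) / 2 := by
        refine Finset.sum_le_sum fun i hi => ?_
        rw [hkey i hi]
        exact re_dot_le (x i) (y i)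
    _ = ((∑ i ∈ T, (star (y i) ⬝ᵥ y i).re) + ∑ i ∈ T, (star (x i) ⬝ᵥ x i).re) / 2 := by
        rw [← Finset.sum_add_distrib, ← Finset.sum_div]
    _ ≤ (1 + 1) / 2 := by linarith
    _ = 1 := by norm_num

end fidbound

/-! ### channels, partial trace as Kraus maps -/

section chan

lemma vecMul_vmv {m n : Type*} [Fintype m] [Fintype n]
    (v : m → ℂ) (x : m → ℂ) (y : n → ℂ) :
    v ᵥ* vecMulVec x y = (v ⬝ᵥ x) • y := by
  funext j
  simp [vecMulVec_apply, vecMul, dotProduct, Finset.sum_mul, mul_assoc]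

lemma sum_mulVec' {m n : Type*} [Fintype m] [Fintype n] {ι : Type*} (s : Finset ι)
    (M : ι → Matrix m n ℂ) (x : n → ℂ) :
    (∑ i ∈ s, M i) *ᵥ x = ∑ i ∈ s, M i *ᵥ x := by
  funext a
  simp only [mulVec, dotProduct, Matrix.sum_apply, Finset.sum_apply, Finset.sum_mul]
  rw [Finset.sum_comm]

/-- The Kraus-form linear map. -/
noncomputable def krausLM {m n : Type*} [Fintype m] [Fintype n] {ι : Type*} [Fintype ι]
    (K : ι → Matrix n m ℂ) : Matrix m m ℂ →ₗ[ℂ] Matrix n n ℂ where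
  toFun X := ∑ i, K i * X * (K i)ᴴ
  map_add' X Y := by
    simp [Matrix.mul_add, Matrix.add_mul, Finset.sum_add_distrib]
  map_smul' c X := by
    simp [Matrix.mul_smul, Matrix.smul_mul, Finset.smul_sum]

lemma krausLM_apply {m n : Type*} [Fintype m] [Fintype n] {ι : Type*} [Fintype ι]
    (K : ι → Matrix n m ℂ) (X : Matrix m m ℂ) :
    krausLM K X = ∑ i, K i * X * (K i)ᴴ := rfl

lemma krausLM_trace {m n : Type*} [Fintype m] [Fintype n] [DecidableEq m] {ι : Type*} [Fintype ι]
    (K : ι → Matrix n m ℂ) (hK : ∑ i, (K i)ᴴ * K i = 1) (X : Matrix m m ℂ) :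
    (krausLM K X).trace = X.trace := by
  rw [krausLM_apply, trace_sum]
  have : ∀ i, (K i * X * (K i)ᴴ).trace = ((K i)ᴴ * K i * X).trace := by
    intro i
    rw [Matrix.trace_mul_cycle]
  rw [Finset.sum_congr rfl fun i _ => this i, ← trace_sum, ← Finset.sum_mul, hK, one_mul]

/-- The linear-map version of `ptrRest`. -/
noncomputable def ptrRestL (d k : ℕ) :
    Matrix (Fin k → Fin d) (Fin k → Fin d) ℂ →ₗ[ℂ] Matrix (Fin d) (Fin d) ℂ where
  toFun := ptrRest
  map_add' W1 W2 := by
    ext a a'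
    simp [ptrRest, Finset.sum_add_distrib]
  map_smul' c W := by
    ext a a'
    simp [ptrRest, Finset.mul_sum]

/-- The isometry-style Kraus operators of the partial trace. -/
def Eh {d k : ℕ} (h : {i : Fin k // (i : ℕ) ≠ 0} → Fin d) :
    Matrix (Fin d) (Fin k → Fin d) ℂ :=
  Matrix.of fun a f => if f = extendFirst a h then 1 else 0

lemma ptrRest_eq_sum {d k : ℕ} (W : Matrix (Fin k → Fin d) (Fin k → Fin d) ℂ) :
    ptrRest W = ∑ h : {i : Fin k // (i : ℕ) ≠ 0} → Fin d, Eh h * W * (Eh h)ᴴ := by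
  ext a a'
  simp only [ptrRest, of_apply, Matrix.sum_apply, mul_apply, Eh, conjTranspose_apply,
    of_apply, ite_mul, one_mul, zero_mul, apply_ite (star : ℂ → ℂ), star_one, star_zero,
    mul_ite, mul_zero, mul_one]
  refine Finset.sum_congr rfl fun h _ => ?_
  rw [Finset.sum_ite_eq' Finset.univ (extendFirst a' h)
    (fun g => ∑ f, if f = extendFirst a h then W f g else 0)]
  simp only [Finset.mem_univ, if_true]
  rw [Finset.sum_ite_eq' Finset.univ (extendFirst a h) (fun f => W f (extendFirst a' h))]
  simp

/-- Entry formula for a Kronecker sandwich with identity on the first factor. -/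
lemma kron_sandwich {dA dB dB' : ℕ} (L : Matrix (Fin dB') (Fin dB) ℂ)
    (ρ : Matrix (Fin dA × Fin dB) (Fin dA × Fin dB) ℂ) (p q : Fin dA × Fin dB') :
    (((1 : Matrix (Fin dA) (Fin dA) ℂ) ⊗ₖ L) * ρ *
      ((1 : Matrix (Fin dA) (Fin dA) ℂ) ⊗ₖ L)ᴴ) p q
      = (L * (Matrix.of fun b b' => ρ (p.1, b) (q.1, b')) * Lᴴ) p.2 q.2 := by
  obtain ⟨p1, p2⟩ := p
  obtain ⟨q1, q2⟩ := q
  simp only [mul_apply, kroneckerMap_apply, conjTranspose_apply, of_apply,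
    Fintype.sum_prod_type, Matrix.one_apply, ite_mul, zero_mul, one_mul, mul_ite, mul_zero,
    apply_ite (star : ℂ → ℂ), star_zero, Finset.sum_ite_eq, Finset.sum_ite_eq',
    Finset.mem_univ, if_true]
  have h1 : ∀ (x : Fin dA) (x1 : Fin dB),
      (∑ x2 : Fin dA, ∑ x3 : Fin dB, if p1 = x2 then L p2 x3 * ρ (x2, x3) (x, x1) else 0)
        = ∑ x3, L p2 x3 * ρ (p1, x3) (x, x1) := by
    intro x x1
    rw [Finset.sum_comm]
    refine Finset.sum_congr rfl fun x3 _ => ?_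
    rw [Finset.sum_ite_eq Finset.univ p1 (fun x2 => L p2 x3 * ρ (x2, x3) (x, x1))]
    simp
  simp only [h1]
  rw [Finset.sum_comm]
  simp [Finset.sum_ite_eq]

end chan

section idt
variable {dA dB dB' : ℕ}

lemma idTensor_apply (Λ : Matrix (Fin dB) (Fin dB) ℂ →ₗ[ℂ] Matrix (Fin dB') (Fin dB') ℂ)
    (ρ : Matrix (Fin dA × Fin dB) (Fin dA × Fin dB) ℂ) (p q : Fin dA × Fin dB') :
    idTensor Λ ρ p q = Λ (Matrix.of fun b b' => ρ (p.1, b) (q.1, b')) p.2 q.2 := rfl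

lemma idTensor_kraus (Λ : Matrix (Fin dB) (Fin dB) ℂ →ₗ[ℂ] Matrix (Fin dB') (Fin dB') ℂ)
    {ι : Type*} [Fintype ι] (K : ι → Matrix (Fin dB') (Fin dB) ℂ)
    (hrep : ∀ X, Λ X = ∑ i, K i * X * (K i)ᴴ)
    (ρ : Matrix (Fin dA × Fin dB) (Fin dA × Fin dB) ℂ) :
    idTensor Λ ρ = ∑ i, ((1 : Matrix (Fin dA) (Fin dA) ℂ) ⊗ₖ K i) * ρ *
      ((1 : Matrix (Fin dA) (Fin dA) ℂ) ⊗ₖ K i)ᴴ := by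
  ext p q
  rw [idTensor_apply, hrep, Matrix.sum_apply, Matrix.sum_apply]
  exact Finset.sum_congr rfl fun i _ => (kron_sandwich (K i) ρ p q).symm

lemma idTensor_psd (Λ : Matrix (Fin dB) (Fin dB) ℂ →ₗ[ℂ] Matrix (Fin dB') (Fin dB') ℂ)
    {ι : Type*} [Fintype ι] (K : ι → Matrix (Fin dB') (Fin dB) ℂ)
    (hrep : ∀ X, Λ X = ∑ i, K i * X * (K i)ᴴ)
    (ρ : Matrix (Fin dA × Fin dB) (Fin dA × Fin dB) ℂ) (hρ : ρ.PosSemidef) :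
    (idTensor Λ ρ).PosSemidef := by
  rw [idTensor_kraus Λ K hrep ρ]
  exact psd_sum _ _ fun i _ => hρ.mul_mul_conjTranspose_same _

lemma idTensor_trace (Λ : Matrix (Fin dB) (Fin dB) ℂ →ₗ[ℂ] Matrix (Fin dB') (Fin dB') ℂ)
    (htp : ∀ X, (Λ X).trace = X.trace)
    (ρ : Matrix (Fin dA × Fin dB) (Fin dA × Fin dB) ℂ) :
    (idTensor Λ ρ).trace = ρ.trace := by
  simp only [Matrix.trace, Matrix.diag, Fintype.sum_prod_type]
  refine Finset.sum_congr rfl fun a _ => ?_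
  have h1 : ∑ b : Fin dB', idTensor Λ ρ (a, b) (a, b)
      = (Λ (Matrix.of fun b b' => ρ (a, b) (a, b'))).trace := by
    simp only [Matrix.trace, Matrix.diag]
    exact Finset.sum_congr rfl fun b _ => rfl
  rw [h1, htp]
  simp only [Matrix.trace, Matrix.diag, of_apply]

/-- linearity of `idTensor` over a quantum-classical decomposition -/
lemma idTensor_qc_sum (Λ : Matrix (Fin dB) (Fin dB) ℂ →ₗ[ℂ] Matrix (Fin dB) (Fin dB) ℂ)
    {N : ℕ} (c : Fin N → ℂ) (σs : Fin N → Matrix (Fin dA) (Fin dA) ℂ)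
    (Q : Fin N → Matrix (Fin dB) (Fin dB) ℂ) :
    idTensor Λ (∑ i, c i • (σs i ⊗ₖ Q i)) = ∑ i, c i • (σs i ⊗ₖ Λ (Q i)) := by
  ext p q
  obtain ⟨a, bb⟩ := p
  obtain ⟨a', bb'⟩ := q
  rw [idTensor_apply]
  have hin : (Matrix.of fun b b' => (∑ i, c i • (σs i ⊗ₖ Q i)) ((a, b)) ((a', b')))
      = ∑ i, (c i * σs i a a') • Q i := by
    ext b b'
    simp only [of_apply, Matrix.sum_apply, Matrix.smul_apply, kroneckerMap_apply,
      smul_eq_mul]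
    exact Finset.sum_congr rfl fun i _ => by ring
  rw [hin, map_sum]
  simp only [_root_.map_smul, Matrix.sum_apply, Matrix.smul_apply, kroneckerMap_apply,
    smul_eq_mul]
  exact Finset.sum_congr rfl fun i _ => by ring

end idt

/-- Any Bose-symmetric extendible channel maps density matrices to density matrices
(tensored with identity). -/
lemma idTensor_density {dA dB k : ℕ} (hk : 0 < k)
    (Λ : Matrix (Fin dB) (Fin dB) ℂ →ₗ[ℂ] Matrix (Fin dB) (Fin dB) ℂ)
    (hext : IsBoseSymExtendible dB k Λ)
    (ρ : Matrix (Fin dA × Fin dB) (Fin dA × Fin dB) ℂ) (hρ : IsDensityMatrix ρ) :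
    IsDensityMatrix (idTensor Λ ρ) := by
  obtain ⟨V, ⟨NN, K, hKrep, hKsum⟩, _hsym, hΛ⟩ := hext
  -- Kraus representation of Λ itself
  set L : (({i : Fin k // (i : ℕ) ≠ 0} → Fin dB) × Fin NN) → Matrix (Fin dB) (Fin dB) ℂ :=
    fun hi => Eh hi.1 * K hi.2 with hL
  have hrep : ∀ X, Λ X = ∑ hi, L hi * X * (L hi)ᴴ := by
    intro X
    calc Λ X = ∑ h : {i : Fin k // (i : ℕ) ≠ 0} → Fin dB, Eh h * (∑ i, K i * X * (K i)ᴴ) * (Eh h)ᴴ := by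
          rw [hΛ, hKrep, ptrRest_eq_sum]
      _ = ∑ h : {i : Fin k // (i : ℕ) ≠ 0} → Fin dB, ∑ i, (Eh h * K i) * X * (Eh h * K i)ᴴ := by
          refine Finset.sum_congr rfl fun h _ => ?_
          rw [Matrix.mul_sum, Matrix.sum_mul]
          refine Finset.sum_congr rfl fun i _ => ?_
          simp only [conjTranspose_mul, Matrix.mul_assoc]
      _ = ∑ hi : ({i : Fin k // (i : ℕ) ≠ 0} → Fin dB) × Fin NN,
            L hi * X * (L hi)ᴴ := by
          rw [Fintype.sum_prod_type]
  constructor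
  · exact idTensor_psd Λ L hrep ρ hρ.1
  · have htp : ∀ X, (Λ X).trace = X.trace := by
      intro X
      rw [hΛ, trace_ptrRest hk, hKrep, ← krausLM_apply, krausLM_trace K hKsum]
    rw [idTensor_trace Λ htp ρ, hρ.2]

/-! ### the symmetric sandwich lemma -/

lemma symProj_sandwich {d k : ℕ} (v : Fin d → ℂ) (wv : Fin d → ℂ)
    (X : Matrix (Fin d) (Fin d) ℂ) :
    symProj d k * (vecMulVec (vecPow k v) wv * X * (vecMulVec (vecPow k v) wv)ᴴ) * symProj d k
      = vecMulVec (vecPow k v) wv * X * (vecMulVec (vecPow k v) wv)ᴴ := by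
  rw [vmv_conjT, vmv_mul, vmv_mul_vmv]
  rw [Matrix.mul_smul, Matrix.smul_mul, symProj_fix]

lemma vecMulVec_zero' {m n : Type*} (u : m → ℂ) :
    vecMulVec u (0 : n → ℂ) = 0 := by
  ext a b'
  simp [vecMulVec_apply]

/-! ### main theorem -/


end

/-- A quantum-classical state can be perfectly locally broadcast: for every
k ≥ 2 there is a k-Bose-symmetric extendible channel fixing it, and the corresponding
supremum of fidelities equals 1. -/
theorem stmt11 {dA dB k : ℕ} (hk : 2 ≤ k)
    (ρ : Matrix (Fin dA × Fin dB) (Fin dA × Fin dB) ℂ) (hρ : IsDensityMatrix ρ)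
    (hqc : IsQuantumClassical ρ) :
    (∃ Λ, IsBoseSymExtendible dB k Λ ∧ idTensor Λ ρ = ρ) ∧ symSup dA dB k ρ = 1 := by
  classical
  obtain ⟨N, p, σs, b, hp0, hp1, hσdm, horth, hρeq⟩ := hqc
  have hk0 : 0 < k := lt_of_lt_of_le two_pos hk
  have hN : N ≠ 0 := by
    rintro rfl
    simp only [Finset.univ_eq_empty, Finset.sum_empty] at hρeq
    rw [hρeq] at hρ
    simpa using hρ.2
  set i0 : Fin N := ⟨0, Nat.pos_of_ne_zero hN⟩ with hi0
  set Q : Fin N → Matrix (Fin dB) (Fin dB) ℂ := fun i => vecMulVec (b i) (star (b i)) with hQdef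
  set u : Fin N → ((Fin k → Fin dB) → ℂ) := fun i => vecPow k (b i) with hudef
  set P : Matrix (Fin dB) (Fin dB) ℂ := ∑ i, Q i with hPdef
  set K1 : Fin N → Matrix (Fin k → Fin dB) (Fin dB) ℂ :=
    fun i => vecMulVec (u i) (star (b i)) with hK1def
  set K2 : Fin dB → Matrix (Fin k → Fin dB) (Fin dB) ℂ :=
    fun j => vecMulVec (u i0) ((1 - P) j) with hK2def
  set KK : Fin (N + dB) → Matrix (Fin k → Fin dB) (Fin dB) ℂ := Fin.addCases K1 K2 with hKKdef
  set V := krausLM KK with hVdef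
  set Λ0 := ptrRestL dB k ∘ₗ V with hΛ0def
  -- basic facts about b, P
  have hbb : ∀ i, star (b i) ⬝ᵥ b i = 1 := by
    intro i
    rw [horth i i, if_pos rfl]
  have huu : ∀ i, star (u i) ⬝ᵥ u i = 1 := by
    intro i
    rw [hudef]
    simp only
    rw [star_vecPow_dot, hbb, one_pow]
  have hQh : ∀ i, (Q i)ᴴ = Q i := by
    intro i
    rw [hQdef]
    simp only
    rw [vmv_conjT, star_star]
  have hPb : ∀ i, P *ᵥ b i = b i := by
    intro i
    rw [hPdef, sum_mulVec']
    have : ∀ l, Q l *ᵥ b i = (if l = i then (1 : ℂ) else 0) • b l := by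
      intro l
      rw [hQdef]
      simp only
      rw [vmv_mulVec, horth l i]
    rw [Finset.sum_congr rfl fun l _ => this l]
    simp only [ite_smul, one_smul, zero_smul]
    rw [Finset.sum_ite_eq' Finset.univ i (fun l => b l)]
    simp
  have hQPz : ∀ i, (1 - P) *ᵥ b i = 0 := by
    intro i
    rw [Matrix.sub_mulVec, Matrix.one_mulVec, hPb, sub_self]
  have hPP : P * P = P := by
    rw [hPdef, Finset.sum_mul_sum]
    have : ∀ i j, Q i * Q j = if i = j then Q i else 0 := by
      intro i j
      rw [hQdef]
      simp only
      rw [vmv_mul_vmv, horth i j]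
      split
      · next h => subst h; simp
      · simp
    calc (∑ i, ∑ j, Q i * Q j) = ∑ i, ∑ j, (if i = j then Q i else 0) :=
          Finset.sum_congr rfl fun i _ => Finset.sum_congr rfl fun j _ => this i j
      _ = ∑ i, Q i := by
          refine Finset.sum_congr rfl fun i _ => ?_
          rw [Finset.sum_ite_eq Finset.univ i (fun _ => Q i)]
          simp
  have hPh : Pᴴ = P := by
    rw [hPdef, conjTranspose_sum]
    exact Finset.sum_congr rfl fun i _ => hQh i
  have hQh' : (1 - P)ᴴ = 1 - P := by rw [conjTranspose_sub, conjTranspose_one, hPh]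
  have hQQ : (1 - P) * (1 - P) = 1 - P := by
    rw [sub_mul, one_mul, mul_sub, mul_one, hPP]
    abel
  -- the Kraus condition
  have hKsum : ∑ i, (KK i)ᴴ * KK i = 1 := by
    rw [hKKdef, Fin.sum_univ_add]
    simp only [Fin.addCases_left, Fin.addCases_right]
    have h1 : ∀ i, (K1 i)ᴴ * K1 i = Q i := by
      intro i
      rw [hK1def, hQdef]
      simp only
      rw [vmv_conjT, star_star, vmv_mul_vmv, huu, one_smul]
    have h2 : ∀ j, (K2 j)ᴴ * K2 j = vecMulVec (star ((1 - P) j)) ((1 - P) j) := by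
      intro j
      rw [hK2def]
      simp only
      rw [vmv_conjT, vmv_mul_vmv, huu, one_smul]
    have h3 : ∑ j, vecMulVec (star ((1 - P) j)) ((1 - P) j) = (1 - P)ᴴ * (1 - P) := by
      ext c c'
      rw [Matrix.mul_apply, Matrix.sum_apply]
      refine Finset.sum_congr rfl fun x _ => ?_
      rw [Matrix.vecMulVec_apply, Matrix.conjTranspose_apply]
      rfl
    rw [Finset.sum_congr rfl fun i _ => h1 i, Finset.sum_congr rfl fun j _ => h2 j, h3,
      hQh', hQQ, ← hPdef]
    simp
  have hchan : IsQuantumChannel V := ⟨N + dB, KK, fun X => rfl, hKsum⟩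
  -- Bose symmetry
  have hform : ∀ i : Fin (N + dB),
      ∃ v wv, KK i = vecMulVec (vecPow k v) wv := by
    intro i
    refine Fin.addCases (motive := fun i => ∃ v wv, KK i = vecMulVec (vecPow k v) wv)
      (fun l => ?_) (fun j => ?_) i
    · refine ⟨b l, star (b l), ?_⟩
      rw [hKKdef]
      simp only [Fin.addCases_left]
      rfl
    · refine ⟨b i0, (1 - P) j, ?_⟩
      rw [hKKdef]
      simp only [Fin.addCases_right]
      rfl
  have hsym : ∀ X, symProj dB k * V X * symProj dB k = V X := by
    intro X
    rw [hVdef, krausLM_apply, Matrix.mul_sum, Matrix.sum_mul]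
    refine Finset.sum_congr rfl fun i _ => ?_
    obtain ⟨v, wv, hvw⟩ := hform i
    rw [hvw]
    exact symProj_sandwich v wv X
  have hΛrep : ∀ X, Λ0 X = ptrRest (V X) := fun X => rfl
  have hext : IsBoseSymExtendible dB k Λ0 := ⟨V, hchan, hsym, hΛrep⟩
  -- the channel fixes ρ
  have hVQ : ∀ i, V (Q i) = vecMulVec (u i) (star (u i)) := by
    intro i
    rw [hVdef, krausLM_apply, hKKdef, Fin.sum_univ_add]
    simp only [Fin.addCases_left, Fin.addCases_right]
    have hK1Q : ∀ l, K1 l * Q i * (K1 l)ᴴ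
        = if l = i then vecMulVec (u i) (star (u i)) else 0 := by
      intro l
      rw [hK1def, hQdef]
      simp only
      rw [vmv_conjT, star_star, vmv_mul, vecMul_vmv, horth l i]
      by_cases hl : l = i
      · subst hl
        rw [if_pos rfl, one_smul, if_pos rfl, vmv_mul_vmv, hbb, one_smul]
      · rw [if_neg hl, zero_smul, if_neg hl, vecMulVec_zero', Matrix.zero_mul]
    have hK2Q : ∀ j, K2 j * Q i * (K2 j)ᴴ = 0 := by
      intro j
      rw [hK2def, hQdef]
      simp only
      rw [vmv_mul, vecMul_vmv]
      have hz : (1 - P) j ⬝ᵥ b i = 0 := congrFun (hQPz i) j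
      rw [hz, zero_smul, vecMulVec_zero', Matrix.zero_mul]
    rw [Finset.sum_congr rfl fun l _ => hK1Q l, Finset.sum_congr rfl fun j _ => hK2Q j]
    rw [Finset.sum_ite_eq' Finset.univ i (fun _ => vecMulVec (u i) (star (u i)))]
    simp
  have hfixQ : ∀ i, Λ0 (Q i) = Q i := by
    intro i
    rw [hΛrep, hVQ, hudef, hQdef]
    simp only
    exact ptrRest_vecPow hk0 (b i) (b i) (hbb i)
  have hfix : idTensor Λ0 ρ = ρ := by
    rw [hρeq, idTensor_qc_sum]
    exact Finset.sum_congr rfl fun i _ => by rw [hfixQ i]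
  refine ⟨⟨Λ0, hext, hfix⟩, ?_⟩
  -- the supremum
  have hmem : (1 : ℝ) ∈ {x : ℝ | ∃ Λ, IsBoseSymExtendible dB k Λ ∧
      x = Fid ρ (idTensor Λ ρ)} := by
    exact ⟨Λ0, hext, by rw [hfix, fid_self hρ]⟩
  have hub : ∀ x ∈ {x : ℝ | ∃ Λ, IsBoseSymExtendible dB k Λ ∧
      x = Fid ρ (idTensor Λ ρ)}, x ≤ 1 := by
    rintro x ⟨Λ, hΛext, rfl⟩
    have hdm := idTensor_density hk0 Λ hΛext ρ hρ
    exact fid_le_one hρ hdm.1 hdm.2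
  exact IsGreatest.csSup_eq ⟨hmem, hub⟩
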